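/- arXiv:1910.05474 — 4 statements merged into one kernel-verified Lean document; each statement's English description precedes it below -/
import Mathlib

section
/- Proposition 1 (outage probability with hardware impairments): Let N ≥ 1, let X_1, …, X_N be independent rate-1 exponential random variables, let γ̃ > 0 be the SNR, let c_1, …, c_N ≥ 0 be the impairment levels, let r_th > 0 be the rate threshold and γ_th = 2^{r_th} − 1. Define the SNDR γ = (γ̃ ∑_{i=1}^N X_i)/(γ̃ ∑_{i=1}^N c_i X_i + 1) and b_i = 1 − c_i γ_th. If the b_i are positive and pairwise distinct, then the outage probability satisfies P(log₂(1 + γ) ≤ r_th) = ∑_{i=1}^N Ξ_i (1 − exp(−γ_th/(γ̃ b_i))), where Ξ_i = ∏_{j≠i} b_i/(b_i − b_j). -/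
open MeasureTheory ProbabilityTheory Finset

/-!
For independent standard exponentials `Xᵢ`, the outage event is, almost surely, the event
`∑ bᵢ Xᵢ ≤ γth / γ̃`, since `γ ≤ γth` unfolds to a linear inequality once the denominator is cleared.
The CDF of the hypoexponential sum `∑ bᵢ Xᵢ` is `1 - ∑ Ξᵢ exp (-s / bᵢ)` on `s ≥ 0`; this is proved by
induction on the number of summands, conditioning on the first one: convolving `exp (-s / β)` with
the density of `b₀ X₀` gives `β / (β - b₀) (exp (-s / β) - exp (-s / b₀))`, and `Ξ` satisfies the
matching recursion. The form in the statement then follows from `∑ Ξᵢ = 1`, which is the Lagrange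
interpolation identity `∑ Lᵢ = 1` at the nodes `bᵢ⁻¹`, evaluated at `0`.
-/

open Real

section PartialFractions

variable {ι : Type*} [Fintype ι] [DecidableEq ι]

noncomputable def partialFractionCoeff (b : ι → ℝ) (i : ι) : ℝ :=
  ∏ j ∈ univ.erase i, b i / (b i - b j)

theorem sum_partialFractionCoeff [Nonempty ι] {b : ι → ℝ} (hb : ∀ i, b i ≠ 0)
    (hinj : Function.Injective b) : ∑ i, partialFractionCoeff b i = 1 := by
  have hv : Set.InjOn (fun i => (b i)⁻¹) (univ : Finset ι) :=
    fun i _ j _ h => hinj (inv_inj.mp h)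
  have h := congrArg (Polynomial.eval 0) (Lagrange.sum_basis hv univ_nonempty)
  rw [Polynomial.eval_finsetSum, Polynomial.eval_one] at h
  rw [← h]
  refine sum_congr rfl fun i _ => ?_
  rw [Lagrange.basis, Polynomial.eval_prod]
  refine prod_congr rfl fun j hj => ?_
  have hij : b i - b j ≠ 0 := sub_ne_zero.mpr (hinj.ne (ne_of_mem_erase hj).symm)
  have hi := hb i
  have hj := hb j
  simp only [Lagrange.basisDivisor, Polynomial.eval_mul, Polynomial.eval_C, Polynomial.eval_sub,
    Polynomial.eval_X, zero_sub]
  rw [inv_sub_inv hi hj, inv_div, ← neg_sub (b i) (b j)]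
  field_simp

noncomputable def hypoexpCDF (b : ι → ℝ) (s : ℝ) : ℝ :=
  if 0 ≤ s then 1 - ∑ i, partialFractionCoeff b i * exp (-(s / b i)) else 0

theorem hypoexpCDF_eq_sum [Nonempty ι] {b : ι → ℝ} (hb : ∀ i, b i ≠ 0)
    (hinj : Function.Injective b) {s : ℝ} (hs : 0 ≤ s) :
    hypoexpCDF b s = ∑ i, partialFractionCoeff b i * (1 - exp (-(s / b i))) := by
  simp only [hypoexpCDF, if_pos hs, mul_sub, mul_one, sum_sub_distrib,
    sum_partialFractionCoeff hb hinj]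

end PartialFractions

theorem partialFractionCoeff_succ {n : ℕ} (b : Fin (n + 1) → ℝ) (i : Fin n) :
    partialFractionCoeff b i.succ =
      b i.succ / (b i.succ - b 0) * partialFractionCoeff (Fin.tail b) i := by
  have h : univ.erase i.succ = cons 0 ((univ.erase i).map (Fin.succEmb n)) (by simp) := by
    ext j
    cases j using Fin.cases <;> simp [eq_comm]
  rw [partialFractionCoeff, h, prod_cons, prod_map]
  rfl

theorem hypoexpCDF_eq_of_tail {n : ℕ} {b : Fin (n + 1) → ℝ} (hb : ∀ i, b i ≠ 0)
    (hinj : Function.Injective b) {s : ℝ} (hs : 0 ≤ s) :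
    hypoexpCDF b s = 1 - exp (-(s / b 0)) - ∑ i, partialFractionCoeff (Fin.tail b) i *
      (b i.succ / (b i.succ - b 0) * (exp (-(s / b i.succ)) - exp (-(s / b 0)))) := by
  have hsum := sum_partialFractionCoeff hb hinj
  have hregroup : ∀ f g : Fin n → ℝ,
      ∑ i, f i * (g i * (exp (-(s / b i.succ)) - exp (-(s / b 0)))) =
        ∑ i, g i * f i * exp (-(s / b i.succ)) - (∑ i, g i * f i) * exp (-(s / b 0)) :=
    fun f g => by
      rw [sum_mul, ← sum_sub_distrib]
      exact sum_congr rfl fun i _ => by ring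
  rw [Fin.sum_univ_succ] at hsum
  rw [hypoexpCDF, if_pos hs, Fin.sum_univ_succ, hregroup]
  simp_rw [partialFractionCoeff_succ] at hsum ⊢
  linear_combination -exp (-(s / b 0)) * hsum

theorem integral_exp_neg_from_zero (T : ℝ) : ∫ x in (0 : ℝ)..T, exp (-x) = 1 - exp (-T) := by
  rw [intervalIntegral.integral_comp_neg (fun x => exp x), integral_exp, neg_zero, exp_zero]

theorem integral_exp_neg_mul_exp_neg_sub_div {a β : ℝ} (s : ℝ) (ha : a ≠ 0) (hβ : β ≠ 0)
    (haβ : β ≠ a) :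
    ∫ x in (0 : ℝ)..s / a, exp (-x) * exp (-((s - a * x) / β)) =
      β / (β - a) * (exp (-(s / β)) - exp (-(s / a))) := by
  have hc : a / β - 1 ≠ 0 := by
    rw [sub_ne_zero, ne_eq, div_eq_one_iff_eq hβ]
    exact haβ.symm
  have hexp : ∀ x, exp (-x) * exp (-((s - a * x) / β)) =
      exp (-(s / β)) * exp ((a / β - 1) * x) := fun x => by
    rw [← exp_add, ← exp_add]
    congr 1
    field_simp
    ring
  have hT : (a / β - 1) * (s / a) = s / β + -(s / a) := by
    field_simp
    ring
  simp_rw [hexp]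
  rw [intervalIntegral.integral_const_mul,
    intervalIntegral.integral_comp_mul_left (fun x => exp x) hc, integral_exp, smul_eq_mul,
    mul_zero, exp_zero, hT, exp_add, exp_neg (s / β)]
  field_simp
  ring

theorem integral_exp_neg_mul_hypoexpCDF_tail {n : ℕ} {b : Fin (n + 1) → ℝ} (hb : ∀ i, 0 < b i)
    (hinj : Function.Injective b) (s : ℝ) :
    ∫ x in Set.Ici 0, exp (-x) * hypoexpCDF (Fin.tail b) (s - b 0 * x) = hypoexpCDF b s := by
  have hb₀ := hb 0
  have hvanish : ∀ x, s < b 0 * x → exp (-x) * hypoexpCDF (Fin.tail b) (s - b 0 * x) = 0 :=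
    fun x hx => by rw [hypoexpCDF, if_neg (by linarith), mul_zero]
  rcases lt_or_ge s 0 with hs | hs
  · rw [hypoexpCDF, if_neg (not_le.mpr hs), setIntegral_congr_fun measurableSet_Ici
      (g := fun _ => 0) fun x hx => hvanish x (by nlinarith [Set.mem_Ici.mp hx]), integral_zero]
  have hT : 0 ≤ s / b 0 := div_nonneg hs hb₀.le
  have hbeyond : ∀ x ∈ Set.Ici 0 \ Set.Icc 0 (s / b 0), s < b 0 * x := fun x hx => by
    rw [mul_comm, ← div_lt_iff₀ hb₀]
    exact lt_of_not_ge fun h => hx.2 ⟨hx.1, h⟩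
  rw [setIntegral_eq_of_subset_of_forall_sdiff_eq_zero measurableSet_Ici Set.Icc_subset_Ici_self
      fun x hx => hvanish x (hbeyond x hx), integral_Icc_eq_integral_Ioc,
    ← intervalIntegral.integral_of_le hT]
  have hexpand : Set.EqOn (fun x => exp (-x) * hypoexpCDF (Fin.tail b) (s - b 0 * x))
      (fun x => exp (-x) - ∑ i, partialFractionCoeff (Fin.tail b) i *
        (exp (-x) * exp (-((s - b 0 * x) / b i.succ)))) (Set.uIcc 0 (s / b 0)) := by
    intro x hx
    rw [Set.uIcc_of_le hT] at hx
    have : b 0 * x ≤ s := by rw [← le_div_iff₀' hb₀]; exact hx.2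
    simp only [hypoexpCDF, if_pos (sub_nonneg.mpr this), mul_sub, mul_one, mul_sum]
    exact congrArg _ (sum_congr rfl fun i _ => by rw [Fin.tail]; ring)
  rw [intervalIntegral.integral_congr hexpand,
    intervalIntegral.integral_sub (Continuous.intervalIntegrable (by fun_prop) _ _)
      (Continuous.intervalIntegrable (by fun_prop) _ _),
    intervalIntegral.integral_finsetSum fun i _ => Continuous.intervalIntegrable (by fun_prop) _ _,
    integral_exp_neg_from_zero]
  simp_rw [intervalIntegral.integral_const_mul]
  rw [sum_congr rfl fun i _ => by rw [integral_exp_neg_mul_exp_neg_sub_div s hb₀.ne'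
    (hb i.succ).ne' (hinj.ne (Fin.succ_ne_zero i))]]
  exact (hypoexpCDF_eq_of_tail (fun i => (hb i).ne') hinj hs).symm

theorem integral_expMeasure {r : ℝ} (hr : 0 ≤ r) (f : ℝ → ℝ) :
    ∫ x, f x ∂expMeasure r = ∫ x in Set.Ici 0, r * exp (-(r * x)) * f x := by
  rw [expMeasure, gammaMeasure, integral_withDensity_eq_integral_toReal_smul (f := gammaPDF 1 r)
    (measurable_gammaPDFReal 1 r).ennreal_ofReal (ae_of_all _ fun _ => ENNReal.ofReal_lt_top),
    ← integral_indicator measurableSet_Ici]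
  congr 1 with x
  rw [show gammaPDF 1 r x = exponentialPDF r x from rfl, exponentialPDF_eq]
  by_cases hx : 0 ≤ x
  · rw [Set.indicator_of_mem (Set.mem_Ici.mpr hx), if_pos hx,
      ENNReal.toReal_ofReal (by positivity), smul_eq_mul]
  · rw [Set.indicator_of_notMem (mt Set.mem_Ici.mp hx), if_neg hx, ENNReal.ofReal_zero,
      ENNReal.toReal_zero, zero_smul]

theorem ae_nonneg_expMeasure (r : ℝ) : ∀ᵐ x ∂expMeasure r, 0 ≤ x := by
  rw [ae_iff]
  simp only [not_le]
  rw [Set.Iio_def, expMeasure, gammaMeasure, withDensity_apply _ measurableSet_Iio]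
  exact lintegral_exponentialPDF_of_nonpos le_rfl

theorem measureReal_pi_sum_mul_le_eq_integral {n : ℕ} (μ : Measure ℝ) [IsFiniteMeasure μ]
    (b : Fin (n + 1) → ℝ) (s : ℝ) :
    (Measure.pi fun _ => μ).real {x | ∑ i, b i * x i ≤ s} =
      ∫ t, (Measure.pi fun _ => μ).real {y | ∑ i, Fin.tail b i * y i ≤ s - b 0 * t} ∂μ := by
  set A := {p : ℝ × (Fin n → ℝ) | b 0 * p.1 + ∑ i, Fin.tail b i * p.2 i ≤ s}
  have hA : MeasurableSet A := measurableSet_le (by fun_prop) measurable_const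
  have hpre : {x : Fin (n + 1) → ℝ | ∑ i, b i * x i ≤ s} =
      MeasurableEquiv.piFinSuccAbove (fun _ => ℝ) 0 ⁻¹' A := by
    ext x
    simp [A, Fin.sum_univ_succ, Fin.tail]
  rw [hpre, (measurePreserving_piFinSuccAbove (fun _ => μ) 0).measureReal_preimage
    hA.nullMeasurableSet, measureReal_def, Measure.prod_apply hA, ← integral_toReal
    (measurable_measure_prodMk_left hA).aemeasurable (ae_of_all _ fun _ => measure_lt_top _ _)]
  refine integral_congr_ae (ae_of_all _ fun t => ?_)
  simp only [measureReal_def, A, Set.preimage_ofPred_eq, le_sub_iff_add_le']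

theorem measureReal_pi_expMeasure_sum_mul_le {n : ℕ} {b : Fin n → ℝ} (hb : ∀ i, 0 < b i)
    (hinj : Function.Injective b) (s : ℝ) :
    (Measure.pi fun _ => expMeasure 1).real {x | ∑ i, b i * x i ≤ s} = hypoexpCDF b s := by
  have := isProbabilityMeasure_expMeasure one_pos
  induction n generalizing s with
  | zero => by_cases hs : 0 ≤ s <;> simp [hypoexpCDF, hs]
  | succ n ih =>
    rw [measureReal_pi_sum_mul_le_eq_integral]
    simp_rw [ih (b := Fin.tail b) (fun i => hb i.succ) (hinj.comp (Fin.succ_injective n)),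
      integral_expMeasure zero_le_one, one_mul]
    exact integral_exp_neg_mul_hypoexpCDF_tail hb hinj s

theorem logb_one_add_sndr_le_iff {ι : Type*} [Fintype ι] {γ rth : ℝ} (hγ : 0 < γ)
    {c x : ι → ℝ} (hc : ∀ i, 0 ≤ c i) (hx : ∀ i, 0 ≤ x i) :
    logb 2 (1 + (γ * ∑ i, x i) / (γ * ∑ i, c i * x i + 1)) ≤ rth ↔
      ∑ i, (1 - c i * (2 ^ rth - 1)) * x i ≤ (2 ^ rth - 1) / γ := by
  have hS : 0 ≤ ∑ i, x i := sum_nonneg fun i _ => hx i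
  have hD : 0 < γ * ∑ i, c i * x i + 1 := by
    have : 0 ≤ ∑ i, c i * x i := sum_nonneg fun i _ => mul_nonneg (hc i) (hx i)
    positivity
  have hsum : ∑ i, (1 - c i * (2 ^ rth - 1)) * x i =
      ∑ i, x i - (2 ^ rth - 1) * ∑ i, c i * x i := by
    rw [mul_sum, ← sum_sub_distrib]
    exact sum_congr rfl fun i _ => by ring
  rw [logb_le_iff_le_rpow one_lt_two (by positivity), hsum, le_div_iff₀ hγ,
    ← le_sub_iff_add_le', div_le_iff₀ hD]
  constructor <;> intro h <;> linarith

/-- Proposition 1: outage probability of a beamforming system with hardware impairments.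
With SNDR `γ ω = (γ̃ * ∑ i, X i ω) / (γ̃ * ∑ i, c i * X i ω + 1)`, threshold rate `rth > 0`,
`γth = 2 ^ rth - 1` and `b i = 1 - c i * γth` positive and pairwise distinct, the outage
probability `P(log₂(1 + γ) ≤ rth)` equals `∑ i, Ξ i * (1 - exp (-γth / (γ̃ * b i)))`. -/
theorem outage_probability_hardware_impairments
    {Ω : Type*} [MeasurableSpace Ω] (μ : Measure Ω) [IsProbabilityMeasure μ]
    (N : ℕ) (hN : 1 ≤ N)
    (X : Fin N → Ω → ℝ) (hXmeas : ∀ i, Measurable (X i))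
    (hXindep : iIndepFun X μ)
    (hXexp : ∀ i, Measure.map (X i) μ = expMeasure 1)
    (γSNR : ℝ) (hγSNR : 0 < γSNR)
    (c : Fin N → ℝ) (hc : ∀ i, 0 ≤ c i)
    (rth : ℝ) (hrth : 0 < rth)
    (γth : ℝ) (hγth : γth = 2 ^ rth - 1)
    (b : Fin N → ℝ) (hb : ∀ i, b i = 1 - c i * γth)
    (hbpos : ∀ i, 0 < b i) (hbdist : Function.Injective b)
    (γ : Ω → ℝ)
    (hγ : ∀ ω, γ ω = (γSNR * ∑ i, X i ω) / (γSNR * ∑ i, c i * X i ω + 1)) :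
    (μ {ω | Real.logb 2 (1 + γ ω) ≤ rth}).toReal =
      ∑ i, (∏ j ∈ univ.erase i, b i / (b i - b j)) *
        (1 - Real.exp (-γth / (γSNR * b i))) := by
  obtain ⟨n, rfl⟩ := Nat.exists_eq_add_of_le' hN
  have hγth_pos : 0 < γth := by rw [hγth, sub_pos]; exact one_lt_rpow one_lt_two hrth
  have hX_nonneg : ∀ᵐ ω ∂μ, ∀ i, 0 ≤ X i ω := ae_all_iff.2 fun i =>
    ae_of_ae_map (hXmeas i).aemeasurable (hXexp i ▸ ae_nonneg_expMeasure 1)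
  have hevent : {ω | logb 2 (1 + γ ω) ≤ rth} =ᵐ[μ]
      (fun ω i => X i ω) ⁻¹' {x | ∑ i, b i * x i ≤ γth / γSNR} := by
    filter_upwards [hX_nonneg] with ω hω
    simp only [hγ, hb, hγth]
    exact propext (logb_one_add_sndr_le_iff hγSNR hc hω)
  have hlaw : μ.map (fun ω i => X i ω) = Measure.pi fun _ => expMeasure 1 := by
    rw [hXindep.map_fun_eq_pi_map fun i => (hXmeas i).aemeasurable]
    simp_rw [hXexp]
  rw [← measureReal_def, measureReal_congr hevent, ← map_measureReal_apply
    (measurable_pi_lambda _ hXmeas) (measurableSet_le (by fun_prop) measurable_const), hlaw,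
    measureReal_pi_expMeasure_sum_mul_le hbpos hbdist,
    hypoexpCDF_eq_sum (fun i => (hbpos i).ne') hbdist (div_pos hγth_pos hγSNR).le]
  simp only [partialFractionCoeff, div_div, neg_div]
end

section
/- Special case of Proposition 1 (equal impairment levels): Let N ≥ 1, let X_1, …, X_N be independent rate-1 exponential random variables, let γ̃ > 0, let c ≥ 0, let r_th > 0 with γ_th = 2^{r_th} − 1, and suppose b = 1 − c·γ_th > 0. Define the SNDR γ = (γ̃ ∑_{i=1}^N X_i)/(γ̃ c ∑_{i=1}^N X_i + 1). Then P(log₂(1 + γ) ≤ r_th) = 1 − ∑_{k=0}^{N−1} (γ_th/(γ̃ b))^k/(k!) · exp(−γ_th/(γ̃ b)). -/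
/-!
On the almost sure event that every `X i` is nonnegative, the SNDR is increasing in
`S = ∑ i, X i`, and `log₂ (1 + γ) ≤ r_th` becomes `S ≤ γ_th / (γ̃ b)`. Independence makes the law
of `(X i)ᵢ` the product of `N` copies of `Exp(1)`, under which `S` has the Erlang CDF
`F N t = 1 - ∑_{k<N} t^k/k! e^{-t}`: by Fubini over the first coordinate this follows by induction
on `N` from the convolution identity `∫₀ᵗ e^{-x} F N (t - x) dx = F (N + 1) t`.
-/

open MeasureTheory ProbabilityTheory Finset Real Set

noncomputable def erlangCDF (n : ℕ) (t : ℝ) : ℝ :=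
  if 0 ≤ t then 1 - (∑ k ∈ range n, t ^ k / k.factorial) * exp (-t) else 0

lemma erlangCDF_of_nonneg {t : ℝ} (ht : 0 ≤ t) (n : ℕ) :
    erlangCDF n t = 1 - (∑ k ∈ range n, t ^ k / k.factorial) * exp (-t) :=
  if_pos ht

lemma erlangCDF_of_neg {t : ℝ} (ht : t < 0) (n : ℕ) : erlangCDF n t = 0 :=
  if_neg ht.not_ge

@[fun_prop]
lemma measurable_erlangCDF (n : ℕ) : Measurable (erlangCDF n) :=
  Measurable.ite measurableSet_Ici (by fun_prop) measurable_const

lemma erlangCDF_nonneg (n : ℕ) (t : ℝ) : 0 ≤ erlangCDF n t := by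
  rcases lt_or_ge t 0 with ht | ht
  · rw [erlangCDF_of_neg ht]
  have h := mul_le_mul_of_nonneg_right (sum_le_exp_of_nonneg ht n) (exp_nonneg (-t))
  rw [← exp_add, add_neg_cancel, exp_zero] at h
  rw [erlangCDF_of_nonneg ht]
  linarith

lemma erlangCDF_le_one (n : ℕ) (t : ℝ) : erlangCDF n t ≤ 1 := by
  rcases lt_or_ge t 0 with ht | ht
  · rw [erlangCDF_of_neg ht]; exact zero_le_one
  rw [erlangCDF_of_nonneg ht, sub_le_self_iff]
  exact mul_nonneg (sum_nonneg fun k _ => by positivity) (exp_nonneg _)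

lemma integral_sub_pow_div_factorial (t : ℝ) (k : ℕ) :
    ∫ x in (0 : ℝ)..t, (t - x) ^ k / k.factorial = t ^ (k + 1) / (k + 1).factorial := by
  rw [intervalIntegral.integral_comp_sub_left (fun u => u ^ k / k.factorial), sub_self, sub_zero,
    intervalIntegral.integral_div, integral_pow, zero_pow k.succ_ne_zero, sub_zero,
    Nat.factorial_succ]
  push_cast
  field_simp

lemma exponentialPDFReal_of_nonneg {r x : ℝ} (hx : 0 ≤ x) :
    exponentialPDFReal r x = r * exp (-(r * x)) := by
  simp [exponentialPDFReal, gammaPDFReal, hx]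

lemma exponentialPDFReal_of_neg {r x : ℝ} (hx : x < 0) : exponentialPDFReal r x = 0 := by
  simp [exponentialPDFReal, gammaPDFReal, hx.not_ge]

lemma integral_exponentialPDFReal_mul_erlangCDF (n : ℕ) (t : ℝ) :
    ∫ x, exponentialPDFReal 1 x * erlangCDF n (t - x) = erlangCDF (n + 1) t := by
  have hvanish : ∀ x ∉ Icc 0 t, exponentialPDFReal 1 x * erlangCDF n (t - x) = 0 := by
    intro x hx
    rcases lt_or_ge x 0 with hx0 | hx0
    · rw [exponentialPDFReal_of_neg hx0, zero_mul]
    · rw [erlangCDF_of_neg (by grind), mul_zero]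
  rcases lt_or_ge t 0 with ht | ht
  · rw [erlangCDF_of_neg ht, ← integral_zero ℝ ℝ]
    exact integral_congr_ae (ae_of_all _ fun x => hvanish x (by grind))
  rw [← setIntegral_eq_integral_of_forall_compl_eq_zero hvanish, integral_Icc_eq_integral_Ioc,
    ← intervalIntegral.integral_of_le ht]
  have hintegrand : EqOn (fun x => exponentialPDFReal 1 x * erlangCDF n (t - x))
      (fun x => exp (-x) - exp (-t) * ∑ k ∈ range n, (t - x) ^ k / k.factorial) (uIcc 0 t) := by
    intro x hx
    rw [uIcc_of_le ht] at hx
    dsimp only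
    rw [exponentialPDFReal_of_nonneg hx.1, one_mul, one_mul,
      erlangCDF_of_nonneg (by linarith [hx.2]), mul_sub, mul_one, mul_left_comm, ← exp_add]
    ring_nf
  rw [intervalIntegral.integral_congr hintegrand,
    intervalIntegral.integral_sub (Continuous.intervalIntegrable (by fun_prop) _ _)
      (Continuous.intervalIntegrable (by fun_prop) _ _),
    intervalIntegral.integral_const_mul,
    intervalIntegral.integral_finsetSum fun k _ => Continuous.intervalIntegrable (by fun_prop) _ _,
    intervalIntegral.integral_comp_neg, integral_exp, erlangCDF_of_nonneg ht, sum_range_succ']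
  simp only [integral_sub_pow_div_factorial, neg_zero, exp_zero, pow_zero, Nat.factorial_zero,
    Nat.cast_one, div_one]
  ring

lemma integrable_exponentialPDFReal {r : ℝ} (hr : 0 < r) : Integrable (exponentialPDFReal r) :=
  ⟨(measurable_exponentialPDFReal r).aestronglyMeasurable,
    (hasFiniteIntegral_iff_ofReal (ae_of_all _ (exponentialPDFReal_nonneg hr))).2
      ((lintegral_exponentialPDF_eq_one hr).trans_lt ENNReal.one_lt_top)⟩

lemma lintegral_expMeasure_erlangCDF (n : ℕ) (t : ℝ) :
    ∫⁻ x, ENNReal.ofReal (erlangCDF n (t - x)) ∂expMeasure 1 =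
      ENNReal.ofReal (erlangCDF (n + 1) t) := by
  have hpdf_nonneg := exponentialPDFReal_nonneg one_pos
  have hmeas : Measurable fun x => erlangCDF n (t - x) := by fun_prop
  have hint : Integrable fun x => exponentialPDFReal 1 x * erlangCDF n (t - x) := by
    refine (integrable_exponentialPDFReal one_pos).mono' (by fun_prop) (ae_of_all _ fun x => ?_)
    rw [norm_of_nonneg (mul_nonneg (hpdf_nonneg x) (erlangCDF_nonneg n _))]
    exact mul_le_of_le_one_right (hpdf_nonneg x) (erlangCDF_le_one n _)
  rw [show expMeasure 1 = volume.withDensity fun x => .ofReal (exponentialPDFReal 1 x) from rfl,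
    lintegral_withDensity_eq_lintegral_mul _ (measurable_exponentialPDFReal 1).ennreal_ofReal
      hmeas.ennreal_ofReal]
  simp_rw [Pi.mul_apply, ← ENNReal.ofReal_mul (hpdf_nonneg _)]
  rw [← ofReal_integral_eq_lintegral_ofReal hint
    (ae_of_all _ fun x => mul_nonneg (hpdf_nonneg x) (erlangCDF_nonneg n _)),
    integral_exponentialPDFReal_mul_erlangCDF]

lemma pi_expMeasure_sum_le (n : ℕ) (t : ℝ) :
    Measure.pi (fun _ : Fin n => expMeasure 1) {x | ∑ i, x i ≤ t} =
      ENNReal.ofReal (erlangCDF n t) := by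
  induction n generalizing t with
  | zero =>
    rcases lt_or_ge t 0 with ht | ht
    · simp [erlangCDF_of_neg ht, ht.not_ge]
    · simp [erlangCDF_of_nonneg ht, ht]
  | succ n ih =>
    have := isProbabilityMeasure_expMeasure (r := 1) one_pos
    have hs : MeasurableSet {p : ℝ × (Fin n → ℝ) | p.1 + ∑ i, p.2 i ≤ t} :=
      measurableSet_le (by fun_prop) measurable_const
    have hpre : MeasurableEquiv.piFinSuccAbove (fun _ : Fin (n + 1) => ℝ) 0 ⁻¹'
        {p | p.1 + ∑ i, p.2 i ≤ t} = {x | ∑ i, x i ≤ t} := by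
      ext x
      simp [Fin.sum_univ_succ, Fin.tail]
    rw [← hpre, (measurePreserving_piFinSuccAbove _ 0).measure_preimage hs.nullMeasurableSet,
      Measure.prod_apply hs]
    simp_rw [preimage_ofPred_eq, ← le_sub_iff_add_le', ih]
    exact lintegral_expMeasure_erlangCDF n t

lemma measure_sum_le_eq_erlangCDF {Ω : Type*} [MeasurableSpace Ω] {μ : Measure Ω} {n : ℕ}
    {X : Fin n → Ω → ℝ} (hindep : iIndepFun X μ) (hexp : ∀ i, μ.map (X i) = expMeasure 1)
    (t : ℝ) : μ {ω | ∑ i, X i ω ≤ t} = ENNReal.ofReal (erlangCDF n t) := by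
  have := isProbabilityMeasure_expMeasure (r := 1) one_pos
  have hX : ∀ i, AEMeasurable (X i) μ := fun i =>
    .of_map_ne_zero (by rw [hexp i]; exact IsProbabilityMeasure.ne_zero _)
  have hs : MeasurableSet {x : Fin n → ℝ | ∑ i, x i ≤ t} :=
    measurableSet_le (by fun_prop) measurable_const
  rw [← pi_expMeasure_sum_le, ← funext hexp, ← hindep.map_fun_eq_pi_map hX,
    Measure.map_apply_of_aemeasurable (aemeasurable_pi_lambda _ hX) hs]
  rfl

lemma ae_nonneg_of_map_eq_expMeasure {Ω : Type*} [MeasurableSpace Ω] {μ : Measure Ω}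
    {X : Ω → ℝ} {r : ℝ} (hr : 0 < r) (hX : μ.map X = expMeasure r) : ∀ᵐ ω ∂μ, 0 ≤ X ω := by
  have := isProbabilityMeasure_expMeasure hr
  refine ae_of_ae_map (.of_map_ne_zero (by rw [hX]; exact IsProbabilityMeasure.ne_zero _)) ?_
  rw [hX, ae_iff]
  simp only [not_le]
  exact (withDensity_apply _ measurableSet_Iio).trans (lintegral_exponentialPDF_of_nonpos le_rfl)

lemma logb_one_add_le_iff {b x r : ℝ} (hb : 1 < b) (hx : -1 < x) :
    logb b (1 + x) ≤ r ↔ x ≤ b ^ r - 1 := by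
  rw [logb_le_iff_le_rpow hb (by linarith)]
  constructor <;> intro h <;> linarith

noncomputable def sndr (γSNR c S : ℝ) : ℝ := γSNR * S / (γSNR * c * S + 1)

lemma sndr_nonneg {γSNR c S : ℝ} (hγSNR : 0 ≤ γSNR) (hc : 0 ≤ c) (hS : 0 ≤ S) :
    0 ≤ sndr γSNR c S := by
  unfold sndr
  positivity

lemma sndr_le_iff {γSNR c S γth : ℝ} (hγSNR : 0 < γSNR) (hc : 0 ≤ c) (hS : 0 ≤ S)
    (hb : 0 < 1 - c * γth) : sndr γSNR c S ≤ γth ↔ S ≤ γth / (γSNR * (1 - c * γth)) := by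
  rw [sndr, div_le_iff₀ (by positivity), le_div_iff₀ (by positivity)]
  constructor <;> intro h <;> linarith

theorem outage_probability_equal_impairments_general
    {Ω : Type*} [MeasurableSpace Ω] (μ : Measure Ω)
    (N : ℕ)
    (X : Fin N → Ω → ℝ)
    (hXindep : iIndepFun X μ)
    (hXexp : ∀ i, Measure.map (X i) μ = expMeasure 1)
    (γSNR : ℝ) (hγSNR : 0 < γSNR) (c : ℝ) (hc : 0 ≤ c)
    (rth : ℝ) (hrth : 0 < rth) (γth : ℝ) (hγth : γth = 2 ^ rth - 1)
    (b : ℝ) (hb : b = 1 - c * γth) (hbpos : 0 < b)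
    (γ : Ω → ℝ)
    (hγ : ∀ ω, γ ω = (γSNR * ∑ i, X i ω) / (γSNR * c * ∑ i, X i ω + 1)) :
    (μ {ω | Real.logb 2 (1 + γ ω) ≤ rth}).toReal =
      1 - ∑ k ∈ range N, (γth / (γSNR * b)) ^ k / (Nat.factorial k : ℝ) *
        Real.exp (-(γth / (γSNR * b))) := by
  have hγth_nonneg : 0 ≤ γth := by
    rw [hγth, sub_nonneg]
    exact one_le_rpow one_le_two hrth.le
  have hevent : {ω | logb 2 (1 + γ ω) ≤ rth} =ᵐ[μ] {ω | ∑ i, X i ω ≤ γth / (γSNR * b)} := by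
    have hX_nonneg : ∀ᵐ ω ∂μ, ∀ i, 0 ≤ X i ω :=
      ae_all_iff.2 fun i => ae_nonneg_of_map_eq_expMeasure one_pos (hXexp i)
    refine Filter.eventuallyEq_set.2 ?_
    filter_upwards [hX_nonneg] with ω hω
    have hS : 0 ≤ ∑ i, X i ω := sum_nonneg fun i _ => hω i
    have hγω : γ ω = sndr γSNR c (∑ i, X i ω) := hγ ω
    rw [hb] at hbpos ⊢
    rw [hγω, logb_one_add_le_iff one_lt_two (by linarith [sndr_nonneg hγSNR.le hc hS]), ← hγth,
      sndr_le_iff hγSNR hc hS hbpos]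
  rw [measure_congr hevent, measure_sum_le_eq_erlangCDF hXindep hXexp,
    ENNReal.toReal_ofReal (erlangCDF_nonneg _ _), erlangCDF_of_nonneg (by positivity), sum_mul]

/-- Special case of Proposition 1 with equal impairment levels: the outage probability
is the Erlang CDF `1 - ∑_{k=0}^{N-1} (γth/(γ̃ b))^k / k! * exp (-γth/(γ̃ b))`. -/
theorem outage_probability_equal_impairments
    {Ω : Type*} [MeasurableSpace Ω] (μ : Measure Ω) [IsProbabilityMeasure μ]
    (N : ℕ) (hN : 1 ≤ N)
    (X : Fin N → Ω → ℝ) (hXmeas : ∀ i, Measurable (X i))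
    (hXindep : iIndepFun X μ)
    (hXexp : ∀ i, Measure.map (X i) μ = expMeasure 1)
    (γSNR : ℝ) (hγSNR : 0 < γSNR) (c : ℝ) (hc : 0 ≤ c)
    (rth : ℝ) (hrth : 0 < rth) (γth : ℝ) (hγth : γth = 2 ^ rth - 1)
    (b : ℝ) (hb : b = 1 - c * γth) (hbpos : 0 < b)
    (γ : Ω → ℝ)
    (hγ : ∀ ω, γ ω = (γSNR * ∑ i, X i ω) / (γSNR * c * ∑ i, X i ω + 1)) :
    (μ {ω | Real.logb 2 (1 + γ ω) ≤ rth}).toReal =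
      1 - ∑ k ∈ range N, (γth / (γSNR * b)) ^ k / (Nat.factorial k : ℝ) *
        Real.exp (-(γth / (γSNR * b))) :=
  outage_probability_equal_impairments_general μ N X hXindep hXexp γSNR hγSNR c hc rth hrth γth hγth
    b hb hbpos γ hγ
end

section
/- Massive-antenna capacity ceiling: For any fixed γ̃ > 0 and any c > 0, the sequence N ↦ log₂(1 + N/(N·c + 1/γ̃)) converges, as the number of antennas N → ∞, to log₂(1 + 1/c). -/
open Filter

/-- Massive-antenna capacity ceiling: for fixed SNR `γ̃ > 0` and impairment level `c > 0`,
`log₂(1 + N/(N c + 1/γ̃)) → log₂(1 + 1/c)` as the number of antennas `N → ∞`. -/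
theorem capacity_ceiling_many_antennas
    (γSNR : ℝ) (hγSNR : 0 < γSNR) (c : ℝ) (hc : 0 < c) :
    Tendsto (fun N : ℕ => Real.logb 2 (1 + N / (N * c + 1 / γSNR))) atTop
      (nhds (Real.logb 2 (1 + 1 / c))) := by
  have hinner : Tendsto (fun N : ℕ => (N : ℝ) / (N * c + 1 / γSNR)) atTop (nhds (1 / c)) := by
    have h0 : Tendsto (fun N : ℕ => (1 / γSNR) / (N : ℝ)) atTop (nhds 0) := by
      simpa using tendsto_const_nhds.div_atTop (tendsto_natCast_atTop_atTop (R := ℝ))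
    have hden : Tendsto (fun N : ℕ => c + (1 / γSNR) / (N : ℝ)) atTop (nhds c) := by
      simpa using tendsto_const_nhds.add h0
    have h1 : Tendsto (fun N : ℕ => (c + (1 / γSNR) / (N : ℝ))⁻¹) atTop (nhds c⁻¹) :=
      hden.inv₀ hc.ne'
    simp only [one_div]
    refine h1.congr' ?_
    filter_upwards [eventually_gt_atTop 0] with N hN
    have hN' : (0 : ℝ) < N := by exact_mod_cast hN
    field_simp
  have hcont : ContinuousAt (fun x : ℝ => Real.logb 2 (1 + x)) (1 / c) := by
    have : (1 : ℝ) + 1 / c ≠ 0 := by positivity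
    exact (Real.continuousAt_logb (by simpa using this)).comp
      (continuous_const.add continuous_id).continuousAt
  exact hcont.tendsto.comp hinner
end

section
/- Mean identity for the partial-fraction coefficients: For every N ≥ 1 and all pairwise distinct real numbers c_1, …, c_N, one has ∑_{i=1}^N c_i · ∏_{j≠i} c_i/(c_i − c_j) = ∑_{i=1}^N c_i. -/
open Finset Polynomial Lagrange

lemma basis_coeff_top {N : ℕ} (c : Fin N → ℝ) (i : Fin N) :
    (Lagrange.basis (univ : Finset (Fin N)) c i).coeff (N - 1) = nodalWeight univ c i := by
  have hi : i ∈ (univ : Finset (Fin N)) := mem_univ i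
  rw [basis_eq_prod_sub_inv_mul_nodal_div hi, ← nodal_erase_eq_nodal_div hi, coeff_C_mul]
  have hmonic : (nodal ((univ : Finset (Fin N)).erase i) c).Monic := nodal_monic
  have hdeg : (nodal ((univ : Finset (Fin N)).erase i) c).natDegree = N - 1 := by
    rw [natDegree_nodal, card_erase_of_mem hi, card_univ, Fintype.card_fin]
  rw [← hdeg, hmonic.coeff_natDegree, mul_one]

/-- Mean identity for the partial-fraction coefficients: for pairwise distinct reals
`c 1, …, c N`, `∑ i, c i * ∏_{j ≠ i} c i / (c i - c j) = ∑ i, c i`. -/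
theorem sum_partial_fraction_coeffs_mean
    (N : ℕ) (hN : 1 ≤ N) (c : Fin N → ℝ) (hcdist : Function.Injective c) :
    ∑ i, c i * ∏ j ∈ univ.erase i, c i / (c i - c j) = ∑ i, c i := by
  classical
  have hc : Set.InjOn c (univ : Finset (Fin N)) := hcdist.injOn
  set f : ℝ[X] := X ^ N - nodal (univ : Finset (Fin N)) c with hf
  have hcard : #(univ : Finset (Fin N)) = N := by simp
  have hdegnodal : (nodal (univ : Finset (Fin N)) c).degree = (N : WithBot ℕ) := by
    rw [degree_nodal, hcard]
  have hdegX : ((X : ℝ[X]) ^ N).degree = (N : WithBot ℕ) := degree_X_pow N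
  have hdegf : f.degree < (#(univ : Finset (Fin N)) : WithBot ℕ) := by
    rw [hcard]
    have := degree_sub_lt (p := (X : ℝ[X]) ^ N) (q := nodal univ c)
      (hdegX.trans hdegnodal.symm) (monic_X_pow N).ne_zero
      ((monic_X_pow (R := ℝ) N).leadingCoeff.trans nodal_monic.leadingCoeff.symm)
    rw [hdegX] at this
    exact this
  have heval : ∀ i ∈ (univ : Finset (Fin N)), f.eval (c i) = (fun i => c i ^ N) i := by
    intro i hi
    simp [hf, eval_nodal_at_node hi]
  have hinterp : f = interpolate univ c (fun i => c i ^ N) :=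
    eq_interpolate_of_eval_eq _ hc hdegf heval
  have hcoeff := congrArg (fun p : ℝ[X] => p.coeff (N - 1)) hinterp
  simp only [interpolate_apply, finset_sum_coeff, coeff_C_mul] at hcoeff
  have h1 : (nodal (univ : Finset (Fin N)) c).coeff (N - 1) = -∑ i, c i := by
    have h := prod_X_sub_C_coeff_card_pred (univ : Finset (Fin N)) c (by rw [hcard]; omega)
    rw [hcard] at h
    rw [nodal_eq]; exact h
  have hlhs : f.coeff (N - 1) = ∑ i, c i := by
    rw [hf, coeff_sub, coeff_X_pow, if_neg (by omega), h1]; ring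
  have hkey : ∑ i, c i ^ N * nodalWeight univ c i = ∑ i, c i := by
    rw [← hlhs, hcoeff]
    exact Finset.sum_congr rfl fun i _ => by rw [basis_coeff_top c i]
  rw [← hkey]
  refine Finset.sum_congr rfl fun i _ => ?_
  have hNe : N - 1 + 1 = N := by omega
  calc c i * ∏ j ∈ univ.erase i, c i / (c i - c j)
      = c i * ((∏ _j ∈ univ.erase i, c i) * ∏ j ∈ univ.erase i, (c i - c j)⁻¹) := by
        rw [← prod_mul_distrib]
        simp [div_eq_mul_inv]
    _ = c i ^ N * nodalWeight univ c i := by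
        rw [prod_const, card_erase_of_mem (mem_univ i), hcard, nodalWeight, ← mul_assoc,
          ← pow_succ', hNe]
end
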